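/- arXiv:1507.08212 — 3 statements merged into one kernel-verified Lean document; each statement's English description precedes it below -/
import Mathlib

section
/- Let G and G' be simple graphs on the same finite vertex set such that for every vertex v, the multiset of degrees in G of the neighbors of v in G equals the multiset of degrees in G' of the neighbors of v in G' (i.e., G and G' are realizations of the same neighborhood degree list). Then there exists a finite sequence of N-switches which, when applied to G, results in the graph G'. -/
/-- The degree of a vertex: the number of its neighbors. -/
noncomputable def deg {V : Type*} (G : SimpleGraph V) (v : V) : ℕ :=
  (G.neighborSet v).ncard

/-- The neighborhood degree list of a vertex `v`: the multiset of the degrees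
(in `G`) of the neighbors of `v`. -/
noncomputable def NDL {V : Type*} [Fintype V] (G : SimpleGraph V) (v : V) : Multiset ℕ :=
  ((G.neighborSet v).toFinite.toFinset).val.map (deg G)

/-- The graph resulting from deleting the edges `ac` and `bd` of `G` and adding
the edges `ad` and `bc`. -/
def switchedGraph {V : Type*} (G : SimpleGraph V) (a b c d : V) : SimpleGraph V :=
  (G.deleteEdges {s(a, c), s(b, d)}) ⊔ SimpleGraph.fromEdgeSet {s(a, d), s(b, c)}

/-- `H` is obtained from `G` by a 2-switch on the alternating 4-cycle `a, b, c, d`. -/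
def IsTwoSwitch {V : Type*} (G H : SimpleGraph V) (a b c d : V) : Prop :=
  a ≠ b ∧ a ≠ c ∧ a ≠ d ∧ b ≠ c ∧ b ≠ d ∧ c ≠ d ∧
  G.Adj a c ∧ G.Adj b d ∧ ¬ G.Adj a d ∧ ¬ G.Adj b c ∧
  H = switchedGraph G a b c d

/-- `H` is obtained from `G` by performing some N-switch: a 2-switch in which
additionally `deg a = deg b` and `deg c = deg d`. -/
def NSwitch {V : Type*} (G H : SimpleGraph V) : Prop :=
  ∃ a b c d : V, IsTwoSwitch G H a b c d ∧ deg G a = deg G b ∧ deg G c = deg G d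

/-!
Both graphs have the same degrees, since `deg G v` is the size of `NDL G v`; we induct on the
number of edges of `G \ G'`. Call the edges of `G \ G'` red and those of `G' \ G` blue. Comparing
`NDL G v` with `NDL G' v` shows that `v` has a red neighbour of degree `k` iff it has a blue one.
This forces a red-blue-red path `x₀x₁x₂x₃` with `deg x₀ = deg x₂`, `deg x₁ = deg x₃`, `x₀ ≠ x₃`
and `x₀x₃` not red. Otherwise fix a red edge with end degrees `j, k` and, among the vertices of
degree `j` with a blue neighbour of degree `k`, take `x₂` with the most red neighbours of degree
`k`; for such a blue neighbour `x₁`, a red neighbour of `x₁` of degree `j` is again such a vertex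
and has strictly more. If `x₀x₃ ∉ G`, trading `x₀x₁, x₂x₃` for `x₀x₃, x₂x₁` is an N-switch of `G`;
otherwise `x₀x₃ ∈ G'`, and trading `x₂x₁, x₀x₃` for `x₂x₃, x₀x₁` is an N-switch of `G'`. Either
one lowers the number of red edges, and N-switches are reversible and preserve every
neighbourhood degree list.
-/

section

variable {V : Type*}

lemma Set.ncard_lt_of_subset_insert_sdiff_pair {β : Type*} [Finite β] {s t : Set β} {x y z : β}
    (h : s ⊆ insert z (t \ {x, y})) (hx : x ∈ t) (hy : y ∈ t) (hxy : x ≠ y) :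
    s.ncard < t.ncard := by
  have hpair : ({x, y} : Set β) ⊆ t := Set.insert_subset hx (Set.singleton_subset_iff.2 hy)
  have h2 : 2 ≤ t.ncard := Set.ncard_pair hxy ▸ Set.ncard_le_ncard hpair
  calc s.ncard ≤ (insert z (t \ {x, y})).ncard := Set.ncard_le_ncard h
    _ ≤ (t \ {x, y}).ncard + 1 := Set.ncard_insert_le _ _
    _ < t.ncard := by rw [Set.ncard_sdiff hpair, Set.ncard_pair hxy]; omega

section TwoSwitch

variable {G H : SimpleGraph V} {a b c d : V}

lemma switchedGraph_adj (G : SimpleGraph V) (a b c d x y : V) :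
    (switchedGraph G a b c d).Adj x y ↔
      (G.Adj x y ∧ s(x, y) ≠ s(a, c) ∧ s(x, y) ≠ s(b, d)) ∨
      ((s(x, y) = s(a, d) ∨ s(x, y) = s(b, c)) ∧ x ≠ y) := by
  simp [switchedGraph]

lemma switchedGraph_swap_left (G : SimpleGraph V) (a b c d : V) :
    switchedGraph G b a d c = switchedGraph G a b c d := by
  simp only [switchedGraph, Set.pair_comm]

lemma switchedGraph_swap_sides (G : SimpleGraph V) (a b c d : V) :
    switchedGraph G c d a b = switchedGraph G a b c d := by
  simp only [switchedGraph, Sym2.eq_swap, Set.pair_comm]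

namespace IsTwoSwitch

lemma swap_left (h : IsTwoSwitch G H a b c d) : IsTwoSwitch G H b a d c := by
  obtain ⟨hab, hac, had, hbc, hbd, hcd, hGac, hGbd, hGad, hGbc, rfl⟩ := h
  exact ⟨hab.symm, hbd, hbc, had, hac, hcd.symm, hGbd, hGac, hGbc, hGad,
    (switchedGraph_swap_left G a b c d).symm⟩

lemma swap_sides (h : IsTwoSwitch G H a b c d) : IsTwoSwitch G H c d a b := by
  obtain ⟨hab, hac, had, hbc, hbd, hcd, hGac, hGbd, hGad, hGbc, rfl⟩ := h
  exact ⟨hcd, hac.symm, hbc.symm, had.symm, hbd.symm, hab, hGac.symm, hGbd.symm,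
    fun h' => hGbc h'.symm, fun h' => hGad h'.symm, (switchedGraph_swap_sides G a b c d).symm⟩

lemma neighborSet_left (h : IsTwoSwitch G H a b c d) :
    H.neighborSet a = insert d (G.neighborSet a) \ {c} := by
  obtain ⟨hab, hac, had, hbc, hbd, hcd, hGac, hGbd, hGad, hGbc, rfl⟩ := h
  ext u
  simp only [SimpleGraph.mem_neighborSet, switchedGraph_adj, Sym2.eq_iff, Set.mem_sdiff,
    Set.mem_insert_iff, Set.mem_singleton_iff]
  grind [SimpleGraph.Adj.ne]

lemma neighborSet_of_ne (h : IsTwoSwitch G H a b c d) {v : V} (ha : v ≠ a) (hb : v ≠ b)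
    (hc : v ≠ c) (hd : v ≠ d) : H.neighborSet v = G.neighborSet v := by
  obtain ⟨-, -, -, -, -, -, -, -, -, -, rfl⟩ := h
  ext u
  simp only [SimpleGraph.mem_neighborSet, switchedGraph_adj, Sym2.eq_iff]
  grind

lemma symm (h : IsTwoSwitch G H a b c d) : IsTwoSwitch H G a b d c := by
  obtain ⟨hab, hac, had, hbc, hbd, hcd, hGac, hGbd, hGad, hGbc, rfl⟩ := h
  refine ⟨hab, had, hac, hbd, hbc, hcd.symm, ?_, ?_, ?_, ?_, ?_⟩
  · simp [switchedGraph_adj, had]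
  · simp [switchedGraph_adj, hbc]
  · simp only [switchedGraph_adj, ne_eq, Sym2.eq_iff]
    grind
  · simp only [switchedGraph_adj, ne_eq, Sym2.eq_iff]
    grind
  · ext u w
    simp only [switchedGraph_adj, ne_eq, Sym2.eq_iff]
    grind [SimpleGraph.Adj.ne, SimpleGraph.Adj.symm]

lemma neighborSet_left_eq_image [DecidableEq V] (h : IsTwoSwitch G H a b c d) :
    H.neighborSet a = Equiv.swap c d '' G.neighborSet a := by
  rw [h.neighborSet_left]
  obtain ⟨-, -, -, -, -, -, hGac, -, hGad, -, -⟩ := h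
  exact (Equiv.image_swap_of_mem_of_notMem (s := G.neighborSet a) hGac hGad).symm

lemma exists_perm_neighborSet_eq (h : IsTwoSwitch G H a b c d) {β : Type*} {g : V → β}
    (hab : g a = g b) (hcd : g c = g d) (v : V) :
    ∃ σ : Equiv.Perm V, (∀ u, g (σ u) = g u) ∧ H.neighborSet v = σ '' G.neighborSet v := by
  classical
  have hswap {x y : V} (hxy : g x = g y) (u : V) : g (Equiv.swap x y u) = g u := by
    rw [Equiv.swap_apply_def]
    split_ifs <;> simp_all
  by_cases ha : v = a
  · exact ⟨_, hswap hcd, ha ▸ h.neighborSet_left_eq_image⟩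
  by_cases hb : v = b
  · exact ⟨_, hswap hcd.symm, hb ▸ h.swap_left.neighborSet_left_eq_image⟩
  by_cases hc : v = c
  · exact ⟨_, hswap hab, hc ▸ h.swap_sides.neighborSet_left_eq_image⟩
  by_cases hd : v = d
  · exact ⟨_, hswap hab.symm, hd ▸ h.swap_sides.swap_left.neighborSet_left_eq_image⟩
  exact ⟨1, fun _ => rfl, by simp [h.neighborSet_of_ne ha hb hc hd]⟩

lemma deg_eq (h : IsTwoSwitch G H a b c d) : deg H = deg G := by
  funext v
  obtain ⟨σ, -, hσ⟩ := h.exists_perm_neighborSet_eq (g := fun _ => ()) rfl rfl v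
  rw [deg, deg, hσ, Set.ncard_image_of_injective _ σ.injective]

variable {K : SimpleGraph V}

lemma ncard_edgeSet_sdiff_lt [Finite V] (h : IsTwoSwitch G H a b c d) (hac : ¬K.Adj a c)
    (hbd : ¬K.Adj b d) (hbc : K.Adj b c) :
    (H \ K).edgeSet.ncard < (G \ K).edgeSet.ncard := by
  obtain ⟨hab, -, had, -, -, -, hGac, hGbd, -, -, rfl⟩ := h
  refine Set.ncard_lt_of_subset_insert_sdiff_pair (x := s(a, c)) (y := s(b, d)) (z := s(a, d))
    ?_ ⟨hGac, hac⟩ ⟨hGbd, hbd⟩ (by simp [hab, had])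
  intro e he
  induction e using Sym2.ind with | _ u w => ?_
  simp only [SimpleGraph.edgeSet_sdiff, Set.mem_sdiff, SimpleGraph.mem_edgeSet, switchedGraph_adj,
    ne_eq, Sym2.eq_iff, Set.mem_insert_iff, Set.mem_singleton_iff] at he ⊢
  grind [SimpleGraph.Adj.symm]

lemma ncard_sdiff_edgeSet_lt [Finite V] (h : IsTwoSwitch K H a b c d) (hac : ¬G.Adj a c)
    (had : G.Adj a d) (hbc : G.Adj b c) :
    (G \ H).edgeSet.ncard < (G \ K).edgeSet.ncard := by
  obtain ⟨hab, hac', -, -, -, -, -, -, hKad, hKbc, rfl⟩ := h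
  refine Set.ncard_lt_of_subset_insert_sdiff_pair (x := s(a, d)) (y := s(b, c)) (z := s(b, d))
    ?_ ⟨had, hKad⟩ ⟨hbc, hKbc⟩ (by simp [hab, hac'])
  intro e he
  induction e using Sym2.ind with | _ u w => ?_
  simp only [SimpleGraph.edgeSet_sdiff, Set.mem_sdiff, SimpleGraph.mem_edgeSet, switchedGraph_adj,
    ne_eq, Sym2.eq_iff, Set.mem_insert_iff, Set.mem_singleton_iff] at he ⊢
  grind [SimpleGraph.Adj.symm, SimpleGraph.Adj.ne]

end IsTwoSwitch

lemma NDL_eq_of_neighborSet_eq_image [Fintype V] {v : V} (σ : Equiv.Perm V)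
    (hσ : ∀ u, deg H (σ u) = deg G u) (hN : H.neighborSet v = σ '' G.neighborSet v) :
    NDL H v = NDL G v := by
  classical
  have hfin : (H.neighborSet v).toFinite.toFinset =
      (G.neighborSet v).toFinite.toFinset.map σ.toEmbedding := by
    ext
    simp [hN, Equiv.image_eq_preimage_symm]
  rw [NDL, NDL, hfin, Finset.map_val, Multiset.map_map]
  exact Multiset.map_congr rfl fun u _ => hσ u

namespace NSwitch

lemma NDL_eq [Fintype V] (h : NSwitch G H) (v : V) : NDL H v = NDL G v := by
  obtain ⟨a, b, c, d, hs, hab, hcd⟩ := h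
  obtain ⟨σ, hσ, hN⟩ := hs.exists_perm_neighborSet_eq hab hcd v
  exact NDL_eq_of_neighborSet_eq_image σ (by simpa [hs.deg_eq] using hσ) hN

lemma symm (h : NSwitch G H) : NSwitch H G := by
  obtain ⟨a, b, c, d, hs, hab, hcd⟩ := h
  exact ⟨a, b, d, c, hs.symm, by rw [hs.deg_eq, hab], by rw [hs.deg_eq, hcd]⟩

end NSwitch

end TwoSwitch

section SameNDL

variable [Fintype V] {G G' : SimpleGraph V}

lemma card_NDL (G : SimpleGraph V) (v : V) : Multiset.card (NDL G v) = deg G v := by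
  rw [NDL, Multiset.card_map, deg, Set.ncard_eq_toFinset_card _ (G.neighborSet v).toFinite]
  rfl

lemma count_NDL (G : SimpleGraph V) (v : V) (k : ℕ) :
    (NDL G v).count k = (G.neighborSet v ∩ deg G ⁻¹' {k}).ncard := by
  classical
  rw [NDL, Multiset.count_map, ← Finset.filter_val, Finset.card_val, ← Set.ncard_coe_finset]
  congr 1
  ext u
  simp [eq_comm]

lemma deg_eq_of_NDL_eq (h : ∀ v, NDL G v = NDL G' v) : deg G = deg G' := by
  funext v
  rw [← card_NDL, ← card_NDL, h v]

lemma nonempty_sdiff_neighborSet_of_NDL_eq (h : ∀ v, NDL G v = NDL G' v) (v : V) (k : ℕ)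
    (hR : ((G \ G').neighborSet v ∩ deg G ⁻¹' {k}).Nonempty) :
    ((G' \ G).neighborSet v ∩ deg G ⁻¹' {k}).Nonempty := by
  obtain ⟨u, ⟨huG, huG'⟩, hu⟩ := hR
  have hcard : (G.neighborSet v ∩ deg G ⁻¹' {k}).ncard
      = (G'.neighborSet v ∩ deg G ⁻¹' {k}).ncard := by
    rw [← count_NDL, h v, count_NDL, deg_eq_of_NDL_eq h]
  by_contra hB
  have hsub : G'.neighborSet v ∩ deg G ⁻¹' {k} ⊆ G.neighborSet v ∩ deg G ⁻¹' {k} :=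
    fun w ⟨hwG', hw⟩ => ⟨not_not.1 fun hwG => hB ⟨w, ⟨hwG', hwG⟩, hw⟩, hw⟩
  have heq := Set.eq_of_subset_of_ncard_le hsub hcard.le
  exact huG' (heq ▸ ⟨huG, hu⟩ : u ∈ G'.neighborSet v ∩ deg G ⁻¹' {k}).1

lemma nonempty_sdiff_neighborSet_iff_of_NDL_eq (h : ∀ v, NDL G v = NDL G' v) (v : V) (k : ℕ) :
    ((G \ G').neighborSet v ∩ deg G ⁻¹' {k}).Nonempty ↔
      ((G' \ G).neighborSet v ∩ deg G ⁻¹' {k}).Nonempty := by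
  refine ⟨nonempty_sdiff_neighborSet_of_NDL_eq h v k, fun hB => ?_⟩
  rw [deg_eq_of_NDL_eq h] at hB ⊢
  exact nonempty_sdiff_neighborSet_of_NDL_eq (fun v => (h v).symm) v k hB

lemma exists_sdiff_adj_of_NDL_eq (h : ∀ v, NDL G v = NDL G' v) (hne : G ≠ G') :
    ∃ p q, (G \ G').Adj p q := by
  by_contra! hR
  refine hne (SimpleGraph.ext (funext₂ fun u w => propext ⟨fun huw => ?_, fun huw => ?_⟩))
  · exact not_not.1 fun hG' => hR u w ⟨huw, hG'⟩
  · by_contra hG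
    obtain ⟨x, hx, -⟩ := (nonempty_sdiff_neighborSet_iff_of_NDL_eq h u (deg G w)).2
      ⟨w, ⟨huw, hG⟩, rfl⟩
    exact hR u x hx

end SameNDL

section AlternatingPath

variable {α : Type*} {R B : SimpleGraph V} {f : V → α}

lemma ncard_neighborSet_inter_lt [Finite V] (hRB : Disjoint R B)
    (hclosed : ∀ x₀ x₁ x₂ x₃, R.Adj x₀ x₁ → B.Adj x₁ x₂ → R.Adj x₂ x₃ →
      f x₀ = f x₂ → f x₁ = f x₃ → x₀ ≠ x₃ → R.Adj x₀ x₃)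
    {a x₁ x₂ : V} (h₁₂ : B.Adj x₁ x₂) (h₁a : R.Adj x₁ a) (hfa : f a = f x₂) :
    (R.neighborSet x₂ ∩ f ⁻¹' {f x₁}).ncard < (R.neighborSet a ∩ f ⁻¹' {f x₁}).ncard := by
  set C := R.neighborSet x₂ ∩ f ⁻¹' {f x₁}
  set Ca := R.neighborSet a ∩ f ⁻¹' {f x₁}
  have hCa : C \ {a} ⊆ Ca := fun u ⟨⟨h₂u, hu⟩, hua⟩ =>
    ⟨hclosed a x₁ x₂ u h₁a.symm h₁₂ h₂u hfa (Eq.symm hu) (Ne.symm hua), hu⟩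
  have hx₁ : x₁ ∈ Ca := ⟨h₁a.symm, rfl⟩
  have hx₁C : x₁ ∉ C := fun h => SimpleGraph.disjoint_left.1 hRB _ _ h.1 h₁₂.symm
  by_cases ha : a ∈ C
  · have hx₂ : x₂ ∈ Ca := ⟨ha.1.symm, hfa.symm.trans ha.2⟩
    have hx₂C : x₂ ∉ insert x₁ (C \ {a}) := by
      rintro (h | h)
      · exact h₁₂.ne h.symm
      · exact R.irrefl h.1.1
    calc C.ncard = (C \ {a}).ncard + 1 := (Set.ncard_sdiff_singleton_add_one ha).symm
      _ < (insert x₂ (insert x₁ (C \ {a}))).ncard := by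
        rw [Set.ncard_insert_of_notMem hx₂C, Set.ncard_insert_of_notMem fun h => hx₁C h.1]
        omega
      _ ≤ Ca.ncard := Set.ncard_le_ncard (Set.insert_subset hx₂ (Set.insert_subset hx₁ hCa))
  · rw [Set.sdiff_singleton_eq_self ha] at hCa
    calc C.ncard < (insert x₁ C).ncard := by rw [Set.ncard_insert_of_notMem hx₁C]; omega
      _ ≤ Ca.ncard := Set.ncard_le_ncard (Set.insert_subset hx₁ hCa)

theorem exists_alternating_path [Finite V] (hRB : Disjoint R B)
    (htransfer : ∀ v k, (R.neighborSet v ∩ f ⁻¹' {k}).Nonempty ↔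
      (B.neighborSet v ∩ f ⁻¹' {k}).Nonempty)
    {p q : V} (hpq : R.Adj p q) :
    ∃ x₀ x₁ x₂ x₃, R.Adj x₀ x₁ ∧ B.Adj x₁ x₂ ∧ R.Adj x₂ x₃ ∧ f x₀ = f x₂ ∧ f x₁ = f x₃ ∧
      x₀ ≠ x₃ ∧ ¬R.Adj x₀ x₃ := by
  by_contra! hclosed
  set S := {v | f v = f p ∧ (B.neighborSet v ∩ f ⁻¹' {f q}).Nonempty}
  have hp : p ∈ S := ⟨rfl, (htransfer p _).1 ⟨q, hpq, rfl⟩⟩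
  obtain ⟨x₂, ⟨hx₂, x₁, h₂₁, hx₁⟩, hmax⟩ :=
    S.exists_max_image (fun v => (R.neighborSet v ∩ f ⁻¹' {f q}).ncard) S.toFinite ⟨p, hp⟩
  obtain ⟨a, h₁a, ha⟩ := (htransfer x₁ (f x₂)).2 ⟨x₂, h₂₁.symm, rfl⟩
  have hlt := ncard_neighborSet_inter_lt hRB hclosed h₂₁.symm h₁a ha
  have haS : a ∈ S := ⟨ha.trans hx₂, (htransfer a _).1 ⟨x₁, h₁a.symm, hx₁⟩⟩
  rw [Set.mem_preimage, Set.mem_singleton_iff] at hx₁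
  exact (hmax a haS).not_gt (hx₁ ▸ hlt)

end AlternatingPath

lemma exists_NSwitch_decreasing_of_NDL_eq [Fintype V] {G G' : SimpleGraph V}
    (h : ∀ v, NDL G v = NDL G' v) (hne : G ≠ G') :
    (∃ H, NSwitch G H ∧ (H \ G').edgeSet.ncard < (G \ G').edgeSet.ncard) ∨
      (∃ H, NSwitch G' H ∧ (G \ H).edgeSet.ncard < (G \ G').edgeSet.ncard) := by
  obtain ⟨p, q, hpq⟩ := exists_sdiff_adj_of_NDL_eq h hne
  obtain ⟨x₀, x₁, x₂, x₃, ⟨hG₀₁, hG'₀₁⟩, ⟨hG'₁₂, hG₁₂⟩, ⟨hG₂₃, hG'₂₃⟩, hd₀₂, hd₁₃, h₀₃, hR₀₃⟩ :=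
    exists_alternating_path disjoint_sdiff_sdiff (nonempty_sdiff_neighborSet_iff_of_NDL_eq h) hpq
  have h₀₂ : x₀ ≠ x₂ := by rintro rfl; exact hG₁₂ hG₀₁.symm
  have h₁₃ : x₁ ≠ x₃ := by rintro rfl; exact hG₁₂ hG₂₃.symm
  by_cases hG₀₃ : G.Adj x₀ x₃
  · have hG'₀₃ : G'.Adj x₀ x₃ := not_not.1 fun h' => hR₀₃ ⟨hG₀₃, h'⟩
    have hs : IsTwoSwitch G' (switchedGraph G' x₂ x₀ x₁ x₃) x₂ x₀ x₁ x₃ :=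
      ⟨h₀₂.symm, hG'₁₂.ne.symm, hG₂₃.ne, hG₀₁.ne, h₀₃, h₁₃, hG'₁₂.symm, hG'₀₃, hG'₂₃,
        hG'₀₁, rfl⟩
    rw [deg_eq_of_NDL_eq h] at hd₀₂ hd₁₃
    exact Or.inr ⟨_, ⟨_, _, _, _, hs, hd₀₂.symm, hd₁₃⟩,
      hs.ncard_sdiff_edgeSet_lt (fun h' => hG₁₂ h'.symm) hG₂₃ hG₀₁⟩
  · have hs : IsTwoSwitch G (switchedGraph G x₀ x₂ x₁ x₃) x₀ x₂ x₁ x₃ :=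
      ⟨h₀₂, hG₀₁.ne, h₀₃, hG'₁₂.ne.symm, hG₂₃.ne, h₁₃, hG₀₁, hG₂₃, hG₀₃,
        fun h' => hG₁₂ h'.symm, rfl⟩
    exact Or.inl ⟨_, ⟨_, _, _, _, hs, hd₀₂, hd₁₃⟩,
      hs.ncard_edgeSet_sdiff_lt hG'₀₁ hG'₂₃ hG'₁₂.symm⟩

end

/-- If `G` and `G'` are realizations of the same neighborhood degree list, then a
finite sequence of N-switches transforms `G` into `G'`. -/
theorem stmt7 {V : Type*} [Fintype V] (G G' : SimpleGraph V)
    (h : ∀ v, NDL G v = NDL G' v) :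
    Relation.ReflTransGen NSwitch G G' := by
  induction hn : (G \ G').edgeSet.ncard using Nat.strong_induction_on generalizing G G' with
  | _ n ih =>
  by_cases hne : G = G'
  · exact hne ▸ .refl
  rcases exists_NSwitch_decreasing_of_NDL_eq h hne with ⟨H, hGH, hlt⟩ | ⟨H, hG'H, hlt⟩
  · exact .head hGH (ih _ (hn ▸ hlt) H G' (fun v => (hGH.NDL_eq v).trans (h v)) rfl)
  · exact .tail (ih _ (hn ▸ hlt) G H (fun v => (h v).trans (hG'H.NDL_eq v).symm) rfl) hG'H.symm
end

section
/- Let G be a finite simple graph. Then G is the unique labeled realization of its neighborhood degree list (i.e., every simple graph H on the same vertex set with NDL_H(v) = NDL_G(v) for all vertices v satisfies H = G) if and only if G admits no N-switch, i.e., there do not exist pairwise distinct vertices a, b, c, d of G with ac and bd edges, ad and bc non-edges, deg_G(a) = deg_G(b), and deg_G(c) = deg_G(d). -/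
lemma Set.ncard_sdiff_singleton_le_of_ncard_le {α : Type*} [Finite α] {s t : Set α}
    {x y : α} (h : t.ncard ≤ s.ncard) (hxy : x ∈ s ↔ y ∈ t) :
    (t \ {y}).ncard ≤ (s \ {x}).ncard := by
  by_cases hx : x ∈ s
  · rw [Set.ncard_sdiff_singleton_of_mem hx, Set.ncard_sdiff_singleton_of_mem (hxy.1 hx)]
    omega
  · rwa [Set.sdiff_singleton_eq_self hx, Set.sdiff_singleton_eq_self (mt hxy.2 hx)]

namespace SimpleGraph

variable {V κ : Type*} {f : V → κ} {G H : SimpleGraph V} {a b c d v : V} {j : κ}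

/- `f` is an arbitrary vertex colouring, not necessarily proper. For `f = deg G` the colour
switches are the N-switches, and the colour degrees are the multiplicities in the NDL. -/
def colorNeighborSet (G : SimpleGraph V) (f : V → κ) (v : V) (j : κ) : Set V :=
  {u | G.Adj v u ∧ f u = j}

noncomputable def colorDegree (G : SimpleGraph V) (f : V → κ) (v : V) (j : κ) : ℕ :=
  (G.colorNeighborSet f v j).ncard

lemma card_NDL [Fintype V] (G : SimpleGraph V) (v : V) : (NDL G v).card = deg G v := by
  rw [NDL, Multiset.card_map, Finset.card_val, deg, Set.ncard_eq_toFinset_card]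

lemma count_NDL [Fintype V] (G : SimpleGraph V) (v : V) (j : ℕ) :
    (NDL G v).count j = G.colorDegree (deg G) v j := by
  rw [NDL, Multiset.count_map, ← Finset.filter_val, Finset.card_val, colorDegree,
    ← Set.ncard_coe_finset]
  congr 1
  ext u
  simp [colorNeighborSet, eq_comm]

lemma NDL_eq_NDL_iff [Fintype V] (hdeg : deg H = deg G) :
    NDL H v = NDL G v ↔ ∀ j, H.colorDegree (deg G) v j = G.colorDegree (deg G) v j := by
  simp only [Multiset.ext, count_NDL, hdeg]

-- The conjuncts are ordered as in `stmt9`, whose right-hand side is `G.ColorSwitchFree (deg G)`.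
def IsColorSwitch (G : SimpleGraph V) (f : V → κ) (a b c d : V) : Prop :=
  a ≠ b ∧ a ≠ c ∧ a ≠ d ∧ b ≠ c ∧ b ≠ d ∧ c ≠ d ∧
    G.Adj a c ∧ G.Adj b d ∧ ¬ G.Adj a d ∧ ¬ G.Adj b c ∧ f a = f b ∧ f c = f d

def ColorSwitchFree (G : SimpleGraph V) (f : V → κ) : Prop :=
  ¬ ∃ a b c d, G.IsColorSwitch f a b c d

lemma IsColorSwitch.symm (h : G.IsColorSwitch f a b c d) : G.IsColorSwitch f b a d c := by
  obtain ⟨hab, hac, had, hbc, hbd, hcd, hGac, hGbd, hGad, hGbc, hfab, hfcd⟩ := h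
  exact ⟨hab.symm, hbd, hbc, had, hac, hcd.symm, hGbd, hGac, hGbc, hGad, hfab.symm, hfcd.symm⟩

def twoSwitch (G : SimpleGraph V) (a b c d : V) : SimpleGraph V :=
  fromEdgeSet (G.edgeSet \ {s(a, c), s(b, d)} ∪ {s(a, d), s(b, c)})

lemma IsColorSwitch.twoSwitch_ne (h : G.IsColorSwitch f a b c d) : G.twoSwitch a b c d ≠ G := by
  obtain ⟨-, -, had, -, -, -, -, -, hnad, -⟩ := h
  intro heq
  apply hnad
  rw [← heq]
  simp [twoSwitch, had]

lemma IsColorSwitch.exists_perm_twoSwitch_adj (h : G.IsColorSwitch f a b c d) (v : V) :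
    ∃ σ : Equiv.Perm V, (∀ u, f (σ u) = f u) ∧
      ∀ u, (G.twoSwitch a b c d).Adj v u ↔ G.Adj v (σ u) := by
  classical
  obtain ⟨hab, hac, had, hbc, hbd, hcd, hGac, hGbd, hGad, hGbc, hfab, hfcd⟩ := h
  have hswap {x y : V} (hxy : f x = f y) (u : V) : f (Equiv.swap x y u) = f u := by
    rw [Equiv.swap_apply_def]; split_ifs <;> simp_all
  -- At `a` and `b` the switch exchanges the roles of `c` and `d`; at `c` and `d`, of `a` and `b`.
  by_cases hv : v = a ∨ v = b
  · refine ⟨Equiv.swap c d, hswap hfcd, fun u => ?_⟩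
    rcases hv with rfl | rfl <;> simp [twoSwitch, Equiv.swap_apply_def] <;>
      grind [G.adj_comm, G.ne_of_adj]
  by_cases hv' : v = c ∨ v = d
  · refine ⟨Equiv.swap a b, hswap hfab, fun u => ?_⟩
    rcases hv' with rfl | rfl <;> simp [twoSwitch, Equiv.swap_apply_def] <;>
      grind [G.adj_comm, G.ne_of_adj]
  · refine ⟨Equiv.refl V, fun _ => rfl, fun u => ?_⟩
    simp [twoSwitch]
    grind [G.ne_of_adj]

lemma deg_eq_of_adj_iff_perm (σ : Equiv.Perm V) (hadj : ∀ u, H.Adj v u ↔ G.Adj v (σ u)) :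
    deg H v = deg G v := by
  have : H.neighborSet v = σ ⁻¹' G.neighborSet v := Set.ext hadj
  rw [deg, deg, this, Set.ncard_preimage_of_injective_subset_range σ.injective (by simp)]

lemma colorDegree_eq_of_adj_iff_perm (σ : Equiv.Perm V) (hσ : ∀ u, f (σ u) = f u)
    (hadj : ∀ u, H.Adj v u ↔ G.Adj v (σ u)) : H.colorDegree f v j = G.colorDegree f v j := by
  have : H.colorNeighborSet f v j = σ ⁻¹' G.colorNeighborSet f v j := by
    ext u
    simp [colorNeighborSet, hadj, hσ]
  rw [colorDegree, colorDegree, this,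
    Set.ncard_preimage_of_injective_subset_range σ.injective (by simp)]

lemma ColorSwitchFree.subset_or_subset (hG : G.ColorSwitchFree f) (hab : f a = f b) (j : κ) :
    G.colorNeighborSet f a j \ {b} ⊆ G.colorNeighborSet f b j \ {a} ∨
      G.colorNeighborSet f b j \ {a} ⊆ G.colorNeighborSet f a j \ {b} := by
  rcases eq_or_ne a b with rfl | hne
  · exact Or.inl subset_rfl
  by_contra! h
  obtain ⟨w, ⟨⟨haw, hw⟩, hwb⟩, hw'⟩ := Set.not_subset.1 h.1
  obtain ⟨u, ⟨⟨hbu, hu⟩, hua⟩, hu'⟩ := Set.not_subset.1 h.2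
  refine hG ⟨a, b, w, u, hne, haw.ne, Ne.symm hua, Ne.symm hwb, hbu.ne, ?_, haw, hbu, ?_, ?_, hab,
    hw.trans hu.symm⟩
  · rintro rfl; exact hu' ⟨⟨haw, hw⟩, hwb⟩
  · exact fun hau => hu' ⟨⟨hau, hu⟩, hbu.ne'⟩
  · exact fun hbw => hw' ⟨⟨hbw, hw⟩, haw.ne'⟩

lemma ColorSwitchFree.sdiff_subset_of_forall_le [Finite V] (hG : G.ColorSwitchFree f) {x : V}
    (hmax : ∀ x, G.colorDegree f x j ≤ G.colorDegree f a j) (hx : f x = f a) :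
    G.colorNeighborSet f x j \ {a} ⊆ G.colorNeighborSet f a j := by
  rcases hG.subset_or_subset hx j with h | h
  · exact h.trans Set.sdiff_subset
  · have hmem : x ∈ G.colorNeighborSet f a j ↔ a ∈ G.colorNeighborSet f x j := by
      simp only [colorNeighborSet, Set.mem_ofPred_eq, G.adj_comm a x, hx]
    rw [← Set.eq_of_subset_of_ncard_le h (Set.ncard_sdiff_singleton_le_of_ncard_le (hmax x) hmem)]
    exact Set.sdiff_subset

lemma exists_adj_of_colorDegree_eq [Finite V] {u : V}
    (h : H.colorDegree f v j = G.colorDegree f v j) (hu : H.Adj v u) (hj : f u = j) :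
    ∃ w, G.Adj v w ∧ f w = j := by
  have hpos : 0 < G.colorDegree f v j := h ▸ (Set.ncard_pos).2 ⟨u, hu, hj⟩
  exact (Set.ncard_pos).1 hpos

/- Take `a` with the most neighbours of colour `j`. By nestedness a vertex `u ≠ a` of colour `j`
is adjacent to `a` iff it has some neighbour of colour `f a`, and this the colour degrees of `u`
detect. -/
lemma ColorSwitchFree.exists_colorNeighborSet_eq [Finite V] (hG : G.ColorSwitchFree f)
    (h : ∀ v j, H.colorDegree f v j = G.colorDegree f v j) (hne : G ≠ ⊥) :
    ∃ a j, (G.colorNeighborSet f a j).Nonempty ∧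
      H.colorNeighborSet f a j = G.colorNeighborSet f a j := by
  obtain ⟨x, y, hxy⟩ := ne_bot_iff_exists_adj.1 hne
  have : Nonempty V := ⟨x⟩
  obtain ⟨a, hmax⟩ := Finite.exists_max fun v => G.colorDegree f v (f y)
  have hpos : 0 < G.colorDegree f x (f y) := (Set.ncard_pos).2 ⟨y, hxy, rfl⟩
  refine ⟨a, f y, (Set.ncard_pos).1 (hpos.trans_le (hmax x)),
    Set.eq_of_subset_of_ncard_le ?_ (h a _).ge⟩
  rintro u ⟨hau, hu⟩
  obtain ⟨x, hux, hx⟩ := exists_adj_of_colorDegree_eq (h u (f a)) hau.symm rfl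
  rcases eq_or_ne x a with rfl | hxa
  · exact ⟨hux.symm, hu⟩
  · exact hG.sdiff_subset_of_forall_le hmax hx ⟨⟨hux.symm, hu⟩, hau.ne'⟩

def colorStar (f : V → κ) (a : V) (j : κ) : SimpleGraph V :=
  fromRel fun v u => v = a ∧ f u = j

/- A switch of `G \ colorStar f a j` whose non-edge `pd` is a deleted star edge would have its
parallel edge `pc` or `qd` in the star as well. -/
lemma ColorSwitchFree.sdiff_colorStar (hG : G.ColorSwitchFree f) (a : V) (j : κ) :
    (G \ colorStar f a j).ColorSwitchFree f := by
  have hnd {p q c d : V} (hs : (G \ colorStar f a j).IsColorSwitch f p q c d) : ¬ G.Adj p d := by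
    obtain ⟨-, hpc, hpd, -, hqd, -, hGpc, hGqd, hGpd, -, hf, hf'⟩ := hs
    intro hadj
    have hstar : (colorStar f a j).Adj p d := by_contra fun h => hGpd ⟨hadj, h⟩
    simp only [sdiff_adj, colorStar, fromRel_adj, not_and] at hGpc hGqd hstar
    rcases hstar.2 with ⟨rfl, hd⟩ | ⟨rfl, hp⟩
    · exact hGpc.2 hpc (Or.inl ⟨rfl, hf' ▸ hd⟩)
    · exact hGqd.2 hqd (Or.inr ⟨rfl, hf ▸ hp⟩)
  rintro ⟨p, q, c, d, hs⟩
  obtain ⟨hpq, hpc, hpd, hqc, hqd, hcd, hGpc, hGqd, -, -, hf, hf'⟩ := id hs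
  exact hG ⟨p, q, c, d, hpq, hpc, hpd, hqc, hqd, hcd, hGpc.1, hGqd.1, hnd hs, hnd hs.symm,
    hf, hf'⟩

lemma colorDegree_sdiff_eq [Finite V] (K : SimpleGraph V)
    (hK : ∀ v u, K.Adj v u → (H.Adj v u ↔ G.Adj v u))
    (h : H.colorDegree f v j = G.colorDegree f v j) :
    (H \ K).colorDegree f v j = (G \ K).colorDegree f v j := by
  have hsdiff (G : SimpleGraph V) :
      (G \ K).colorNeighborSet f v j = G.colorNeighborSet f v j \ K.neighborSet v := by
    ext u
    simp only [colorNeighborSet, sdiff_adj, Set.mem_sdiff, Set.mem_ofPred_eq, mem_neighborSet]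
    tauto
  have hinter : H.colorNeighborSet f v j ∩ K.neighborSet v =
      G.colorNeighborSet f v j ∩ K.neighborSet v := by
    ext u
    simp only [colorNeighborSet, Set.mem_inter_iff, Set.mem_ofPred_eq, mem_neighborSet]
    constructor <;> rintro ⟨⟨hvu, hu⟩, hK'⟩ <;> simp_all
  have hH := Set.ncard_inter_add_ncard_sdiff_eq_ncard (H.colorNeighborSet f v j) (K.neighborSet v)
  have hG := Set.ncard_inter_add_ncard_sdiff_eq_ncard (G.colorNeighborSet f v j) (K.neighborSet v)
  rw [hinter] at hH
  rw [colorDegree, colorDegree, hsdiff, hsdiff]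
  rw [colorDegree, colorDegree] at h
  omega

lemma eq_of_sdiff_eq_of_adj_iff {K : SimpleGraph V}
    (hK : ∀ v u, K.Adj v u → (H.Adj v u ↔ G.Adj v u)) (h : H \ K = G \ K) : H = G := by
  ext v u
  by_cases hvu : K.Adj v u
  · exact hK v u hvu
  · simpa [sdiff_adj, hvu] using congrArg (fun G => G.Adj v u) h

lemma adj_iff_of_colorStar_adj (hN : H.colorNeighborSet f a j = G.colorNeighborSet f a j)
    {v u : V} (hK : (colorStar f a j).Adj v u) : H.Adj v u ↔ G.Adj v u := by
  simp only [colorStar, fromRel_adj] at hK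
  rcases hK with ⟨-, ⟨rfl, hu⟩ | ⟨rfl, hv⟩⟩
  · simpa [colorNeighborSet, hu] using Set.ext_iff.1 hN u
  · simpa [colorNeighborSet, hv, H.adj_comm, G.adj_comm] using Set.ext_iff.1 hN v

theorem ColorSwitchFree.eq_of_colorDegree_eq [Finite V] (hG : G.ColorSwitchFree f)
    (h : ∀ v j, H.colorDegree f v j = G.colorDegree f v j) : H = G := by
  induction G using WellFoundedLT.induction generalizing H with
  | _ G ih =>
  rcases eq_or_ne G ⊥ with rfl | hne
  · ext v u
    simpa using fun hvu => exists_adj_of_colorDegree_eq (h v (f u)) hvu rfl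
  obtain ⟨a, j, ⟨u, hau, hu⟩, hN⟩ := hG.exists_colorNeighborSet_eq h hne
  have hK v u := adj_iff_of_colorStar_adj hN (v := v) (u := u)
  have hlt : G \ colorStar f a j < G := by
    refine lt_of_le_of_ne sdiff_le fun heq => ?_
    have hstar : (colorStar f a j).Adj a u := by simp [colorStar, hau.ne, hu]
    exact ((sdiff_adj _ _ _ _).1 (heq ▸ hau)).2 hstar
  exact eq_of_sdiff_eq_of_adj_iff hK
    (ih _ hlt (hG.sdiff_colorStar a j) fun v k => colorDegree_sdiff_eq _ hK (h v k))

end SimpleGraph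

/-- A finite simple graph is the unique labeled realization of its neighborhood
degree list iff it admits no N-switch. -/
theorem stmt9 {V : Type*} [Fintype V] (G : SimpleGraph V) :
    (∀ H : SimpleGraph V, (∀ v, NDL H v = NDL G v) → H = G) ↔
      ¬ ∃ a b c d : V, a ≠ b ∧ a ≠ c ∧ a ≠ d ∧ b ≠ c ∧ b ≠ d ∧ c ≠ d ∧
          G.Adj a c ∧ G.Adj b d ∧ ¬ G.Adj a d ∧ ¬ G.Adj b c ∧
          deg G a = deg G b ∧ deg G c = deg G d := by
  change _ ↔ G.ColorSwitchFree (deg G)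
  constructor
  · rintro hunique ⟨a, b, c, d, hs⟩
    have hdeg : deg (G.twoSwitch a b c d) = deg G := funext fun v => by
      obtain ⟨σ, -, hσ⟩ := hs.exists_perm_twoSwitch_adj v
      exact SimpleGraph.deg_eq_of_adj_iff_perm σ hσ
    refine hs.twoSwitch_ne (hunique _ fun v => (SimpleGraph.NDL_eq_NDL_iff hdeg).2 fun j => ?_)
    obtain ⟨σ, hσf, hσ⟩ := hs.exists_perm_twoSwitch_adj v
    exact SimpleGraph.colorDegree_eq_of_adj_iff_perm σ hσf hσ
  · intro hfree H hH
    have hdeg : deg H = deg G := funext fun v => by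
      rw [← SimpleGraph.card_NDL, hH, SimpleGraph.card_NDL]
    exact SimpleGraph.ColorSwitchFree.eq_of_colorDegree_eq hfree
      fun v => (SimpleGraph.NDL_eq_NDL_iff hdeg).1 (hH v)
end

section
/- Let G be a finite simple graph on vertices v_1,…,v_n with degree sequence d = (d_1,…,d_n) listed in nonincreasing order (deg_G(v_i) = d_i). Define α(d)_i = max(d_i − i + 1, 0) and β(d)_i = |{j : j > i and d_j ≥ i}| for every i ≥ 1. Then G is the only simple graph on its vertex set in which each vertex v_i has degree d_i (every graph H on the same vertex set with deg_H(v_i) = d_i for all i satisfies H = G) if and only if α(d)_i = β(d)_i for every i ≥ 1. -/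
open Finset
open scoped Classical

lemma deg_eq_degree {V : Type*} (G : SimpleGraph V) (v : V) [Fintype (G.neighborSet v)] :
    deg G v = G.degree v := by
  rw [deg, ← SimpleGraph.card_neighborSet_eq_degree, Set.ncard_eq_toFinset_card',
    Set.toFinset_card]

namespace SimpleGraph

section Switch

variable {V : Type*} {G : SimpleGraph V} {a b c e : V}

def switch (G : SimpleGraph V) (a b c e : V) : SimpleGraph V :=
  fromEdgeSet ((G.edgeSet \ {s(a, b), s(c, e)}) ∪ {s(a, e), s(c, b)})

structure IsSwitchable (G : SimpleGraph V) (a b c e : V) : Prop where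
  adj_ab : G.Adj a b
  adj_ce : G.Adj c e
  not_adj_ae : ¬ G.Adj a e
  not_adj_cb : ¬ G.Adj c b
  ne_ae : a ≠ e
  ne_cb : c ≠ b

lemma switch_comm : G.switch a b c e = G.switch c e a b := by
  simp only [switch, Set.pair_comm]

lemma switch_swap : G.switch a b c e = G.switch e c b a := by
  simp only [switch, Sym2.eq_swap, Set.pair_comm]

lemma IsSwitchable.comm (h : G.IsSwitchable a b c e) : G.IsSwitchable c e a b :=
  ⟨h.adj_ce, h.adj_ab, h.not_adj_cb, h.not_adj_ae, h.ne_cb, h.ne_ae⟩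

lemma IsSwitchable.swap (h : G.IsSwitchable a b c e) : G.IsSwitchable e c b a :=
  ⟨h.adj_ce.symm, h.adj_ab.symm, fun h' => h.not_adj_ae h'.symm, fun h' => h.not_adj_cb h'.symm,
    h.ne_ae.symm, h.ne_cb.symm⟩

lemma IsSwitchable.switch_ne (h : G.IsSwitchable a b c e) : G.switch a b c e ≠ G := by
  obtain ⟨hab, hce, hae, hcb, hae', hcb'⟩ := h
  intro heq
  have hab' := hab
  rw [← heq] at hab'
  have := hab.ne
  have := hce.ne
  simp only [switch, fromEdgeSet_adj, Set.mem_union, Set.mem_sdiff, Set.mem_insert_iff,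
    Set.mem_singleton_iff, Sym2.eq_iff] at hab'
  aesop

variable [Fintype V]

lemma IsSwitchable.neighborFinset_switch_of_ne (h : G.IsSwitchable a b c e) {v : V}
    (ha : v ≠ a) (hb : v ≠ b) (hc : v ≠ c) (he : v ≠ e) :
    (G.switch a b c e).neighborFinset v = G.neighborFinset v := by
  ext y
  simp only [mem_neighborFinset]
  simp only [switch, fromEdgeSet_adj, Set.mem_union, Set.mem_sdiff, Set.mem_insert_iff,
    Set.mem_singleton_iff, Sym2.eq_iff, mem_edgeSet]
  have := h.adj_ab.ne
  constructor
  · aesop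
  · intro hy
    have := hy.ne
    aesop

variable [DecidableEq V]

lemma IsSwitchable.neighborFinset_switch_left (h : G.IsSwitchable a b c e) :
    (G.switch a b c e).neighborFinset a = insert e ((G.neighborFinset a).erase b) := by
  obtain ⟨hab, hce, hae, hcb, hae', hcb'⟩ := h
  have := hab.ne
  have := hce.ne
  ext y
  simp only [mem_neighborFinset, mem_insert, mem_erase]
  simp only [switch, fromEdgeSet_adj, Set.mem_union, Set.mem_sdiff, Set.mem_insert_iff,
    Set.mem_singleton_iff, Sym2.eq_iff, mem_edgeSet]
  constructor
  · aesop
  · rintro (rfl | ⟨hyb, hy⟩)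
    · simp_all
    · have := hy.ne
      aesop

lemma IsSwitchable.degree_switch_left (h : G.IsSwitchable a b c e) :
    (G.switch a b c e).degree a = G.degree a := by
  have hb : b ∈ G.neighborFinset a := (mem_neighborFinset _ _ _).2 h.adj_ab
  have he : e ∉ (G.neighborFinset a).erase b := fun he =>
    h.not_adj_ae ((mem_neighborFinset _ _ _).1 (mem_of_mem_erase he))
  rw [← card_neighborFinset_eq_degree, ← card_neighborFinset_eq_degree,
    h.neighborFinset_switch_left, card_insert_of_notMem he, card_erase_add_one hb]

lemma IsSwitchable.degree_switch (h : G.IsSwitchable a b c e) (v : V) :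
    (G.switch a b c e).degree v = G.degree v := by
  -- `switch_comm` and `switch_swap` move each of `b`, `c`, `e` into the position of `a`.
  by_cases hva : v = a
  · subst hva; exact h.degree_switch_left
  by_cases hvc : v = c
  · subst hvc; rw [switch_comm]; exact h.comm.degree_switch_left
  by_cases hve : v = e
  · subst hve; rw [switch_swap]; exact h.swap.degree_switch_left
  by_cases hvb : v = b
  · subst hvb; rw [switch_swap, switch_comm]; exact h.swap.comm.degree_switch_left
  rw [← card_neighborFinset_eq_degree, ← card_neighborFinset_eq_degree,
    h.neighborFinset_switch_of_ne hva hvb hvc hve]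

lemma card_neighborFinset_erase (G : SimpleGraph V) (u v : V) :
    #((G.neighborFinset u).erase v) = if G.Adj u v then G.degree u - 1 else G.degree u := by
  rw [card_erase_eq_ite, card_neighborFinset_eq_degree]
  simp only [mem_neighborFinset]

lemma neighborFinset_erase_subset_of_degree_le (hG : ∀ a b c e, ¬ G.IsSwitchable a b c e)
    {u v : V} (hd : G.degree v ≤ G.degree u) :
    (G.neighborFinset v).erase u ⊆ G.neighborFinset u := by
  intro w hw
  by_contra hwu
  obtain ⟨hwu', hvw⟩ := mem_erase.1 hw
  have hnot : ¬ (G.neighborFinset u).erase v ⊆ (G.neighborFinset v).erase u := by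
    intro hsub
    have hlt := card_lt_card ((ssubset_iff_of_subset hsub).2
      ⟨w, hw, fun h => hwu (mem_of_mem_erase h)⟩)
    rw [card_neighborFinset_erase, card_neighborFinset_erase, G.adj_comm v u] at hlt
    split_ifs at hlt <;> omega
  obtain ⟨x, hux, hvx⟩ := not_subset.1 hnot
  obtain ⟨hxv, hux⟩ := mem_erase.1 hux
  rw [mem_neighborFinset] at hux hvw hwu
  have hvx' : ¬ G.Adj v x := fun h =>
    hvx (mem_erase.2 ⟨hux.ne', (mem_neighborFinset _ _ _).2 h⟩)
  exact hG u x v w ⟨hux, hvw, hwu, hvx', hwu'.symm, hxv.symm⟩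

end Switch

lemma degree_eq_card_filter_lt_add_card_filter_gt {V : Type*} [LinearOrder V] [Fintype V]
    (G : SimpleGraph V) (v : V) :
    G.degree v = #{w ∈ G.neighborFinset v | w < v} + #{w ∈ G.neighborFinset v | v < w} := by
  rw [← card_neighborFinset_eq_degree, ← card_filter_add_card_filter_not (· < v)]
  congr 2
  ext w
  simp only [mem_filter, mem_neighborFinset, not_lt, and_congr_right_iff]
  exact fun hw => ⟨fun h => lt_of_le_of_ne h hw.ne, le_of_lt⟩

end SimpleGraph

open SimpleGraph

/-- Vertices are `0, …, n - 1`, while `d` is indexed from `1`: vertex `i` has target degree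
`d (i + 1)`, and `i < j` are adjacent iff `i + 1 ≤ d (j + 1)`. -/
def thresholdGraph {n : ℕ} (d : ℕ → ℕ) : SimpleGraph (Fin n) :=
  SimpleGraph.fromRel fun i j => i < j ∧ (i : ℕ) + 1 ≤ d (j + 1)

section Threshold

variable {n : ℕ} {d : ℕ → ℕ}

lemma thresholdGraph_adj_of_lt {i j : Fin n} (h : i < j) :
    (thresholdGraph d).Adj i j ↔ (i : ℕ) + 1 ≤ d (j + 1) := by
  simp only [thresholdGraph, fromRel_adj, ne_eq]
  constructor
  · rintro ⟨-, ⟨-, h'⟩ | ⟨h', -⟩⟩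
    · exact h'
    · exact absurd h (lt_asymm h')
  · exact fun h' => ⟨h.ne, Or.inl ⟨h, h'⟩⟩

lemma eq_thresholdGraph_of_adj_iff {G : SimpleGraph (Fin n)}
    (h : ∀ i j : Fin n, i < j → (G.Adj i j ↔ (i : ℕ) + 1 ≤ d (j + 1))) :
    G = thresholdGraph d := by
  ext i j
  rcases lt_trichotomy i j with hij | rfl | hij
  · rw [thresholdGraph_adj_of_lt hij, h i j hij]
  · simp
  · rw [adj_comm, (thresholdGraph d).adj_comm, thresholdGraph_adj_of_lt hij, h j i hij]

lemma card_filter_lt_neighborFinset_thresholdGraph (i : Fin n) :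
    #{k ∈ (thresholdGraph d).neighborFinset i | k < i} = min (i : ℕ) (d (i + 1)) := by
  have : {k ∈ (thresholdGraph d).neighborFinset i | k < i} =
      ({k : Fin n | (k : ℕ) < min (i : ℕ) (d (i + 1))} : Finset (Fin n)) := by
    ext k
    simp only [mem_filter, mem_neighborFinset, mem_univ, true_and, lt_min_iff]
    constructor
    · rintro ⟨hadj, hki⟩
      rw [adj_comm, thresholdGraph_adj_of_lt hki] at hadj
      exact ⟨hki, hadj⟩
    · rintro ⟨hki, hk⟩
      exact ⟨((thresholdGraph_adj_of_lt hki).2 hk).symm, hki⟩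
  rw [this, Fin.card_filter_val_lt]
  omega

lemma card_filter_gt_neighborFinset_thresholdGraph (i : Fin n) :
    #{j ∈ (thresholdGraph d).neighborFinset i | i < j} =
      #{q ∈ Ioc ((i : ℕ) + 1) n | (i : ℕ) + 1 ≤ d q} := by
  refine card_bij (fun j _ => (j : ℕ) + 1) ?_ (fun _ _ _ _ h => Fin.ext (by omega)) ?_
  · intro j hj
    simp only [mem_filter, mem_neighborFinset] at hj
    rw [thresholdGraph_adj_of_lt hj.2] at hj
    simp only [mem_filter, mem_Ioc]
    exact ⟨⟨by simpa using hj.2, j.isLt⟩, hj.1⟩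
  · intro q hq
    simp only [mem_filter, mem_Ioc] at hq
    obtain ⟨⟨hiq, hqn⟩, hdq⟩ := hq
    have hij : i < ⟨q - 1, by omega⟩ := Fin.lt_def.2 (by simp; omega)
    refine ⟨⟨q - 1, by omega⟩, ?_, by simp; omega⟩
    simp only [mem_filter, mem_neighborFinset, thresholdGraph_adj_of_lt hij]
    exact ⟨by simpa [Nat.sub_add_cancel (by omega : 1 ≤ q)] using hdq, hij⟩

lemma degree_thresholdGraph (i : Fin n) :
    (thresholdGraph d).degree i =
      min (i : ℕ) (d (i + 1)) + #{q ∈ Ioc ((i : ℕ) + 1) n | (i : ℕ) + 1 ≤ d q} := by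
  rw [degree_eq_card_filter_lt_add_card_filter_gt, card_filter_lt_neighborFinset_thresholdGraph,
    card_filter_gt_neighborFinset_thresholdGraph]

lemma degree_thresholdGraph_eq_iff (hzero : ∀ j, n < j → d j = 0) :
    (∀ i : Fin n, (thresholdGraph d).degree i = d (i + 1)) ↔
      ∀ p, 1 ≤ p → d p + 1 - p = #{q ∈ Ioc p n | p ≤ d q} := by
  simp only [degree_thresholdGraph]
  constructor
  · intro h p hp
    by_cases hpn : p ≤ n
    · have := h ⟨p - 1, by omega⟩
      simp only [Nat.sub_add_cancel hp] at this
      omega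
    · rw [Ioc_eq_empty (by omega), filter_empty, card_empty, hzero p (by omega)]
      omega
  · intro h i
    have := h (i + 1) (by omega)
    omega

lemma eq_thresholdGraph_of_neighborFinset_erase_subset {G : SimpleGraph (Fin n)}
    (hG : ∀ i : Fin n, G.degree i = d (i + 1))
    (hnest : ∀ u v : Fin n, u < v → (G.neighborFinset v).erase u ⊆ G.neighborFinset u) :
    G = thresholdGraph d := by
  refine eq_thresholdGraph_of_adj_iff fun i j hij => ⟨fun hij' => ?_, fun hdj => ?_⟩
  · have hsub : ({k : Fin n | (k : ℕ) < i + 1} : Finset (Fin n)) ⊆ G.neighborFinset j := by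
      intro k hk
      rw [mem_filter, Nat.lt_succ_iff, ← Fin.le_def] at hk
      rw [mem_neighborFinset, adj_comm]
      obtain hki | rfl := hk.2.lt_or_eq
      · exact (mem_neighborFinset _ _ _).1
          (hnest k i hki (mem_erase.2 ⟨(hki.trans hij).ne', (mem_neighborFinset _ _ _).2 hij'⟩))
      · exact hij'
    have := card_le_card hsub
    rwa [Fin.card_filter_val_lt, card_neighborFinset_eq_degree, hG, min_eq_right (by omega)] at this
  · -- `j` has more than `i` neighbours, so one `m ≥ i`; nesting at `i < m` then gives `j ~ i`.
    have hlt : #({k : Fin n | (k : ℕ) < i} : Finset (Fin n)) < #(G.neighborFinset j) := by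
      rw [Fin.card_filter_val_lt, card_neighborFinset_eq_degree, hG]
      omega
    obtain ⟨m, hjm, hmi⟩ := exists_mem_notMem_of_card_lt_card hlt
    rw [mem_neighborFinset] at hjm
    rw [mem_filter, not_and, not_lt, ← Fin.le_def] at hmi
    obtain him | rfl := (hmi (mem_univ m)).lt_or_eq
    · exact (mem_neighborFinset _ _ _).1
        (hnest i m him (mem_erase.2 ⟨hij.ne', (mem_neighborFinset _ _ _).2 hjm.symm⟩))
    · exact hjm.symm

section Realization

variable {G : SimpleGraph (Fin n)} {i : Fin n}

lemma thresholdGraph_adj_of_adj_of_forall_lt (hG : ∀ i : Fin n, G.degree i = d (i + 1))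
    (ih : ∀ k < i, ∀ j, G.Adj k j ↔ (thresholdGraph d).Adj k j) {j : Fin n} (hij : i < j)
    (hadj : G.Adj i j) : (thresholdGraph d).Adj i j := by
  rw [thresholdGraph_adj_of_lt hij]
  by_contra! hdj
  have hsub : insert i ({k : Fin n | (k : ℕ) < d (j + 1)} : Finset (Fin n)) ⊆
      G.neighborFinset j := by
    intro k hk
    rw [mem_neighborFinset, adj_comm]
    rcases mem_insert.1 hk with rfl | hk
    · exact hadj
    · rw [mem_filter] at hk
      have hki : k < i := Fin.lt_def.2 (by omega)
      exact (ih k hki j).2 ((thresholdGraph_adj_of_lt (hki.trans hij)).2 (by omega))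
  have := card_le_card hsub
  rw [card_insert_of_notMem (by simp; omega), Fin.card_filter_val_lt,
    card_neighborFinset_eq_degree, hG] at this
  omega

lemma adj_iff_thresholdGraph_adj_of_forall_lt
    (hT : ∀ i : Fin n, (thresholdGraph d).degree i = d (i + 1))
    (hG : ∀ i : Fin n, G.degree i = d (i + 1))
    (ih : ∀ k < i, ∀ j, G.Adj k j ↔ (thresholdGraph d).Adj k j) (j : Fin n) :
    G.Adj i j ↔ (thresholdGraph d).Adj i j := by
  have hlower : {k ∈ G.neighborFinset i | k < i} =
      {k ∈ (thresholdGraph d).neighborFinset i | k < i} := by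
    ext k
    simp only [mem_filter, mem_neighborFinset, and_congr_left_iff]
    exact fun hki => by rw [adj_comm, ih k hki, adj_comm]
  have hupper_sub : {j ∈ G.neighborFinset i | i < j} ⊆
      {j ∈ (thresholdGraph d).neighborFinset i | i < j} := by
    intro j hj
    simp only [mem_filter, mem_neighborFinset] at hj ⊢
    exact ⟨thresholdGraph_adj_of_adj_of_forall_lt hG ih hj.2 hj.1, hj.2⟩
  have hupper := eq_of_subset_of_card_le hupper_sub (by
    have hdeg := (hG i).trans (hT i).symm
    rw [degree_eq_card_filter_lt_add_card_filter_gt, degree_eq_card_filter_lt_add_card_filter_gt,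
      hlower] at hdeg
    omega)
  rcases lt_trichotomy i j with hij | rfl | hij
  · simpa [hij] using congrArg (j ∈ ·) hupper
  · simp
  · rw [adj_comm, ih j hij, adj_comm]

lemma eq_thresholdGraph_of_degree_eq (hT : ∀ i : Fin n, (thresholdGraph d).degree i = d (i + 1))
    (hG : ∀ i : Fin n, G.degree i = d (i + 1)) : G = thresholdGraph d := by
  ext i j
  induction i using WellFoundedLT.induction generalizing j with
  | _ i ih => exact adj_iff_thresholdGraph_adj_of_forall_lt hT hG (fun k hk => ih k hk) j

end Realization

end Threshold

/-- In `ℕ`, `α(d)ᵢ = max (dᵢ - i + 1, 0)` is `d i + 1 - i`; `β(d)ᵢ` only counts `j ≤ n`,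
which loses nothing because `d j = 0` for `j > n` and `i ≥ 1`. -/
theorem stmt12 (n : ℕ) (G : SimpleGraph (Fin n)) (d : ℕ → ℕ)
    (hdeg : ∀ i : Fin n, deg G i = d ((i : ℕ) + 1))
    (hmono : ∀ i j, 1 ≤ i → i ≤ j → d j ≤ d i)
    (hzero : ∀ j, n < j → d j = 0) :
    (∀ H : SimpleGraph (Fin n), (∀ i : Fin n, deg H i = d ((i : ℕ) + 1)) → H = G) ↔
      ∀ i : ℕ, 1 ≤ i →
        d i + 1 - i = ((Finset.Ioc i n).filter (fun j => i ≤ d j)).card := by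
  simp only [deg_eq_degree] at hdeg ⊢
  rw [← degree_thresholdGraph_eq_iff hzero]
  constructor
  · intro huniq
    have hG : ∀ a b c e, ¬ G.IsSwitchable a b c e := fun a b c e h =>
      h.switch_ne (huniq _ fun i => by rw [h.degree_switch, hdeg])
    have hnest : ∀ u v : Fin n, u < v → (G.neighborFinset v).erase u ⊆ G.neighborFinset u :=
      fun u v huv => neighborFinset_erase_subset_of_degree_le (u := u) (v := v) hG
        (by rw [hdeg, hdeg]; exact hmono _ _ (by omega) (by simpa using huv.le))
    rwa [← eq_thresholdGraph_of_neighborFinset_erase_subset hdeg hnest]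
  · intro hT H hH
    rw [eq_thresholdGraph_of_degree_eq hT hH, eq_thresholdGraph_of_degree_eq hT hdeg]
end
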